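/- Let R and S be finite digraphs. If #S(G,R) ≤ #S(G,S) for every finite digraph G, then #H(G,R) ≤ #H(G,S) for every finite digraph G. -/

import Mathlib

/-- A homomorphism between digraphs `(V, A)` and `(W, B)`:
a map sending every arc to an arc. -/
def IsHom {V W : Type} (A : V → V → Prop) (B : W → W → Prop) (f : V → W) : Prop :=
  ∀ ⦃v w : V⦄, A v w → B (f v) (f w)

/-- A strict homomorphism: a homomorphism mapping proper arcs to proper arcs. -/
def IsStrictHom {V W : Type} (A : V → V → Prop) (B : W → W → Prop) (f : V → W) : Prop :=
  IsHom A B f ∧ ∀ ⦃v w : V⦄, A v w → v ≠ w → f v ≠ f w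

/-- Adjacency in a digraph. -/
def DAdj {V : Type} (A : V → V → Prop) (v w : V) : Prop := A v w ∨ A w v

/-- `v` and `w` are connected in `X`: `v = w` (with `v ∈ X`), or there is a line
`z 0, …, z I` inside `X` connecting them, consecutive members being adjacent. -/
def ConnIn {V : Type} (A : V → V → Prop) (X : Set V) (v w : V) : Prop :=
  ∃ (I : ℕ) (z : ℕ → V), z 0 = v ∧ z I = w ∧ (∀ i ≤ I, z i ∈ X) ∧
    ∀ i < I, DAdj A (z i) (z (i + 1))

/-- `γ_X(v)`: the set of `w ∈ X` connected with `v` in `X`. -/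
def gammaSet {V : Type} (A : V → V → Prop) (X : Set V) (v : V) : Set V :=
  {w | ConnIn A X v w}

/-- `Γ_ξ(v)`: the connectivity component of `v` in the preimage `ξ⁻¹(ξ(v))`. -/
def GammaComp {V W : Type} (A : V → V → Prop) (ξ : V → W) (v : V) : Set V :=
  gammaSet A {u | ξ u = ξ v} v

/-- The set of homomorphisms `H(G,H)` (as a type). -/
def HomSet {V W : Type} (A : V → V → Prop) (B : W → W → Prop) : Type :=
  {f : V → W // IsHom A B f}

/-- The set of strict homomorphisms `S(G,H)` (as a type). -/
def StrictHomSet {V W : Type} (A : V → V → Prop) (B : W → W → Prop) : Type :=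
  {f : V → W // IsStrictHom A B f}

/-- The vertex set of the digraph `G_ξ`: the components `Γ_ξ(v)`, `v ∈ V(G)`. -/
def GVert {V W : Type} (A : V → V → Prop) (ξ : V → W) : Type :=
  {C : Set V // ∃ v, C = GammaComp A ξ v}

/-- The arc relation of the digraph `G_ξ`. -/
def GArc {V W : Type} (A : V → V → Prop) (ξ : V → W) :
    GVert A ξ → GVert A ξ → Prop :=
  fun C D => ∃ a ∈ C.1, ∃ b ∈ D.1, A a b

/-- The canonical map `π_ξ : G → G_ξ`, `v ↦ Γ_ξ(v)`. -/
def piMap {V W : Type} (A : V → V → Prop) (ξ : V → W) (v : V) : GVert A ξ :=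
  ⟨GammaComp A ξ v, v, rfl⟩

/-- `Θ_{G,H'}(ξ)`: the homomorphisms `ζ : G → H'` with `G_ζ = G_ξ`
(equality of the digraphs `G_ζ` and `G_ξ`, i.e. of their vertex sets,
which determines the arc sets). -/
def ThetaSet {V W W' : Type} (A : V → V → Prop) (B' : W' → W' → Prop)
    (ξ : V → W) : Set (V → W') :=
  {ζ | IsHom A B' ζ ∧
    {C : Set V | ∃ v, C = GammaComp A ζ v} = {C : Set V | ∃ v, C = GammaComp A ξ v}}

/-- `R ⊑_Γ S` with respect to a class `D'` of finite digraphs: a strong Γ-scheme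
from `R` to `S` exists, i.e. for every finite digraph `G ∈ D'` an injective map
`ρ_G : H(G,R) → H(G,S)` with `Γ_{ρ_G(ξ)}(v) = Γ_ξ(v)` for all `ξ`, `v`. -/
def SqGamma (D' : (V : Type) → (V → V → Prop) → Prop)
    {VR VS : Type} (R : VR → VR → Prop) (S : VS → VS → Prop) : Prop :=
  ∀ (V : Type) [Finite V] [Nonempty V] (A : V → V → Prop), D' V A →
    ∃ ρ : HomSet A R → HomSet A S, Function.Injective ρ ∧
      ∀ (ξ : HomSet A R) (v : V), GammaComp A (ρ ξ).1 v = GammaComp A ξ.1 v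

/-- The class `T_a`: digraphs whose loop-removed digraph is acyclic,
i.e. every closed walk is trivial. -/
def Ta {V : Type} (A : V → V → Prop) : Prop :=
  ∀ (z : ℕ → V) (I : ℕ), 0 < I →
    (∀ i < I, A (z i) (z (i + 1)) ∧ z i ≠ z (i + 1)) → z 0 ≠ z I

/-- A poset: a reflexive, antisymmetric, transitive digraph. -/
def IsPosetRel {V : Type} (A : V → V → Prop) : Prop :=
  Reflexive A ∧ AntiSymmetric A ∧ Transitive A

/-- An element of `P^*`: an irreflexive, antisymmetric, transitive digraph. -/
def IsStrictPosetRel {V : Type} (A : V → V → Prop) : Prop :=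
  Irreflexive A ∧ AntiSymmetric A ∧ Transitive A

/-- The direct (disjoint) sum of two digraphs. -/
def sumRel {V W : Type} (A : V → V → Prop) (B : W → W → Prop) :
    V ⊕ W → V ⊕ W → Prop
  | Sum.inl v, Sum.inl w => A v w
  | Sum.inr v, Sum.inr w => B v w
  | _, _ => False

/-- The open neighborhood `N(v)`. -/
def Nbr {Z : Type} (A : Z → Z → Prop) (v : Z) : Set Z :=
  {w | w ≠ v ∧ (A v w ∨ A w v)}

/-- The in-neighborhood `N^in(v)`. -/
def NIn {Z : Type} (A : Z → Z → Prop) (v : Z) : Set Z :=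
  {w | w ≠ v ∧ A w v}

/-- The out-neighborhood `N^out(v)`. -/
def NOut {Z : Type} (A : Z → Z → Prop) (v : Z) : Set Z :=
  {w | w ≠ v ∧ A v w}

/-- `A_r`: the arcs of `R` minus all arcs between `M` and `X`. -/
def ArRel {Z : Type} (A : Z → Z → Prop) (X M : Set Z) : Z → Z → Prop :=
  fun v w => A v w ∧ ¬(v ∈ M ∧ w ∈ X) ∧ ¬(v ∈ X ∧ w ∈ M)

/-- `A_d = { m β(x) : m x ∈ A(R) ∩ (M × X) }`. -/
def AdRel {Z : Type} (A : Z → Z → Prop) (X M : Set Z) (β : Z → Z) : Z → Z → Prop :=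
  fun v w => v ∈ M ∧ ∃ x ∈ X, A v x ∧ w = β x

/-- `A_u = { β(x) m : x m ∈ A(R) ∩ (X × M) }`. -/
def AuRel {Z : Type} (A : Z → Z → Prop) (X M : Set Z) (β : Z → Z) : Z → Z → Prop :=
  fun v w => w ∈ M ∧ ∃ x ∈ X, A x w ∧ v = β x

/-- The rearranged digraph `S`, with `A(S) = A_r ∪ A_d ∪ A_u`. -/
def SRel {Z : Type} (A : Z → Z → Prop) (X M : Set Z) (β : Z → Z) : Z → Z → Prop :=
  fun v w => ArRel A X M v w ∨ AdRel A X M β v w ∨ AuRel A X M β v w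

/-- `U_ξ = { v : ξ(v) ∈ T and ξ[N_G(v)] ∩ M ≠ ∅ }` (for `T = X`; with `T = Y`
this gives `U'_ζ`). -/
def USet {V Z : Type} (AG : V → V → Prop) (T M : Set Z) (ξ : V → Z) : Set V :=
  {v | ξ v ∈ T ∧ ∃ w ∈ Nbr AG v, ξ w ∈ M}

open Classical in
/-- The rearranged homomorphism `ρ_G(ξ)`: `β(ξ(v))` on `U_ξ` and `ξ(v)` elsewhere. -/
noncomputable def rhoMap {V Z : Type} (AG : V → V → Prop) (X M : Set Z) (β : Z → Z)
    (ξ : V → Z) : V → Z :=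
  fun v => if v ∈ USet AG X M ξ then β (ξ v) else ξ v

/-! The homomorphisms `ξ : G → R` are sorted by their family of components `Γ_ξ`. Those with
the same family as a given `ξ` are exactly the maps `σ ∘ π_ξ` with `σ : G_ξ → R` strict: each of
them is constant on the components of `ξ`, and strictness of `σ` is what keeps the components of
`σ ∘ π_ξ` from merging. The same holds for `S`, so the hypothesis applied to `G_ξ` compares the
fibres over each family one by one, and summing over the fibres compares `H(G,R)` with `H(G,S)`. -/

theorem card_le_card_of_card_fiber_le {α β γ : Type*} [Finite β] {f : α → γ} {g : β → γ}
    (h : ∀ a, Nat.card {a' // f a' = f a} ≤ Nat.card {b // g b = f a}) :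
    Nat.card α ≤ Nat.card β := by
  rcases finite_or_infinite α with hα | hα
  swap
  · simp [Nat.card_eq_zero_of_infinite]
  have fiber_emb : ∀ c, Nonempty ({a // f a = c} ↪ {b // g b = c}) := by
    intro c
    by_cases hc : ∃ a, f a = c
    · obtain ⟨a, rfl⟩ := hc
      have := Fintype.ofFinite {a' // f a' = f a}
      have := Fintype.ofFinite {b // g b = f a}
      exact Function.Embedding.nonempty_of_card_le
        (by simpa only [Nat.card_eq_fintype_card] using h a)
    · exact ⟨⟨fun a => (hc ⟨a.1, a.2⟩).elim, fun a => (hc ⟨a.1, a.2⟩).elim⟩⟩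
  exact Finite.card_le_of_embedding <| (Equiv.sigmaFiberEquiv f).symm.toEmbedding.trans <|
    (Function.Embedding.sigmaMap (.refl γ) fun c => (fiber_emb c).some).trans
      (Equiv.sigmaFiberEquiv g).toEmbedding

section Connectivity

variable {V : Type} {A : V → V → Prop} {X : Set V} {u v w : V}

def DAdjIn (A : V → V → Prop) (X : Set V) (a b : V) : Prop :=
  a ∈ X ∧ b ∈ X ∧ DAdj A a b

instance : Std.Symm (DAdjIn A X) where
  symm _ _ := fun ⟨ha, hb, hab⟩ => ⟨hb, ha, hab.symm⟩

lemma ConnIn.refl (hv : v ∈ X) : ConnIn A X v v :=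
  ⟨0, fun _ => v, rfl, rfl, fun _ _ => hv, fun _ hi => absurd hi (Nat.not_lt_zero _)⟩

lemma ConnIn.tail (h : ConnIn A X u v) (hvw : DAdjIn A X v w) : ConnIn A X u w := by
  obtain ⟨I, z, hz0, hzI, hzX, hzadj⟩ := h
  obtain ⟨-, hw, hadj⟩ := hvw
  refine ⟨I + 1, fun i => if i ≤ I then z i else w, by simpa using hz0, by simp, ?_, ?_⟩
  · intro i _
    dsimp only
    split_ifs with hi
    exacts [hzX i hi, hw]
  · intro i hi
    rcases Nat.lt_succ_iff_lt_or_eq.mp hi with hi | rfl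
    · simpa [hi.le, Nat.succ_le_of_lt hi] using hzadj i hi
    · simpa [hzI] using hadj

lemma connIn_iff_reflTransGen :
    ConnIn A X v w ↔ v ∈ X ∧ Relation.ReflTransGen (DAdjIn A X) v w := by
  constructor
  · rintro ⟨I, z, rfl, rfl, hzX, hzadj⟩
    refine ⟨hzX 0 I.zero_le, ?_⟩
    suffices ∀ i ≤ I, Relation.ReflTransGen (DAdjIn A X) (z 0) (z i) from this I le_rfl
    intro i
    induction i with
    | zero => exact fun _ => .refl
    | succ i ih =>
      exact fun hi => (ih (by omega)).tail ⟨hzX i (by omega), hzX (i + 1) hi, hzadj i hi⟩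
  · rintro ⟨hv, h⟩
    induction h with
    | refl => exact .refl hv
    | tail _ hbc ih => exact ih.tail hbc

lemma ConnIn.mem_left (h : ConnIn A X v w) : v ∈ X :=
  (connIn_iff_reflTransGen.mp h).1

lemma ConnIn.mem_right (h : ConnIn A X v w) : w ∈ X := by
  obtain ⟨I, z, -, rfl, hzX, -⟩ := h
  exact hzX I le_rfl

lemma ConnIn.symm (h : ConnIn A X v w) : ConnIn A X w v :=
  connIn_iff_reflTransGen.mpr
    ⟨h.mem_right, Std.Symm.symm _ _ (connIn_iff_reflTransGen.mp h).2⟩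

lemma ConnIn.trans (huv : ConnIn A X u v) (hvw : ConnIn A X v w) : ConnIn A X u w :=
  connIn_iff_reflTransGen.mpr
    ⟨huv.mem_left, (connIn_iff_reflTransGen.mp huv).2.trans (connIn_iff_reflTransGen.mp hvw).2⟩

lemma ConnIn.induction_on {P : V → Prop} (h : ConnIn A X v w) (hv : P v)
    (step : ∀ a b, DAdjIn A X a b → P a → P b) : P w := by
  obtain ⟨-, hr⟩ := connIn_iff_reflTransGen.mp h
  clear h
  induction hr with
  | refl => exact hv
  | tail _ hab ih => exact step _ _ hab ih

end Connectivity

section Components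

variable {V W W' : Type} {A : V → V → Prop} {ξ : V → W} {a b v w : V}

lemma mem_gammaComp_self : v ∈ GammaComp A ξ v :=
  ConnIn.refl rfl

lemma apply_eq_of_mem_gammaComp (h : w ∈ GammaComp A ξ v) : ξ w = ξ v :=
  ConnIn.mem_right (X := {u | ξ u = ξ v}) h

lemma mem_gammaComp_of_dAdj (hab : DAdj A a b) (h : ξ a = ξ b) : b ∈ GammaComp A ξ a :=
  (ConnIn.refl (X := {u | ξ u = ξ a}) rfl).tail ⟨rfl, h.symm, hab⟩

lemma gammaComp_eq_of_mem (h : w ∈ GammaComp A ξ v) : GammaComp A ξ w = GammaComp A ξ v := by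
  have hfiber : {u | ξ u = ξ w} = {u | ξ u = ξ v} := by
    ext u
    simp [apply_eq_of_mem_gammaComp h]
  ext u
  show ConnIn A {u | ξ u = ξ w} w u ↔ ConnIn A {u | ξ u = ξ v} v u
  rw [hfiber]
  exact ⟨h.trans, h.symm.trans⟩

lemma gammaComp_subset_gammaComp {ζ : V → W'}
    (hcollapse : ∀ a b, DAdj A a b → ζ a = ζ b → ξ a = ξ b) (v : V) :
    GammaComp A ζ v ⊆ GammaComp A ξ v := by
  intro w hw
  refine ConnIn.induction_on hw mem_gammaComp_self ?_
  rintro a b ⟨ha, hb, hab⟩ hva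
  have hξb : ξ b = ξ v := (hcollapse a b hab (ha.trans hb.symm)).symm.trans
    (apply_eq_of_mem_gammaComp hva)
  exact hva.tail ⟨apply_eq_of_mem_gammaComp hva, hξb, hab⟩

end Components

section Quotient

variable {V W W' : Type} {A : V → V → Prop} {ξ : V → W} {B : W' → W' → Prop} {a b v w : V}

variable (A ξ) in
lemma piMap_surjective : Function.Surjective (piMap A ξ) :=
  fun ⟨_, v, hv⟩ => ⟨v, Subtype.ext hv.symm⟩

lemma piMap_eq_piMap_iff : piMap A ξ v = piMap A ξ w ↔ w ∈ GammaComp A ξ v :=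
  ⟨fun h => by
      rw [show GammaComp A ξ v = GammaComp A ξ w from congrArg Subtype.val h]
      exact mem_gammaComp_self,
    fun h => Subtype.ext (gammaComp_eq_of_mem h).symm⟩

lemma piMap_eq_of_mem {C : GVert A ξ} (h : a ∈ C.1) : piMap A ξ a = C := by
  obtain ⟨C, v, rfl⟩ := C
  exact (piMap_eq_piMap_iff.mpr h).symm

lemma gArc_iff {C D : GVert A ξ} :
    GArc A ξ C D ↔ ∃ a b, A a b ∧ piMap A ξ a = C ∧ piMap A ξ b = D :=
  ⟨fun ⟨a, ha, b, hb, hab⟩ => ⟨a, b, hab, piMap_eq_of_mem ha, piMap_eq_of_mem hb⟩,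
    fun ⟨a, b, hab, ha, hb⟩ => ⟨a, ha ▸ mem_gammaComp_self, b, hb ▸ mem_gammaComp_self, hab⟩⟩

lemma isStrictHom_gArc_iff {σ : GVert A ξ → W'} :
    IsStrictHom (GArc A ξ) B σ ↔ IsHom A B (σ ∘ piMap A ξ) ∧
      ∀ ⦃a b⦄, A a b → piMap A ξ a ≠ piMap A ξ b → (σ ∘ piMap A ξ) a ≠ (σ ∘ piMap A ξ) b := by
  constructor
  · rintro ⟨hhom, hstrict⟩
    exact ⟨fun a b hab => hhom (gArc_iff.mpr ⟨a, b, hab, rfl, rfl⟩),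
      fun a b hab => hstrict (gArc_iff.mpr ⟨a, b, hab, rfl, rfl⟩)⟩
  · rintro ⟨hhom, hstrict⟩
    constructor
    · intro C D hCD
      obtain ⟨a, b, hab, rfl, rfl⟩ := gArc_iff.mp hCD
      exact hhom hab
    · intro C D hCD
      obtain ⟨a, b, hab, rfl, rfl⟩ := gArc_iff.mp hCD
      exact hstrict hab

variable (A ξ) in
noncomputable def liftGVert (ζ : V → W') : GVert A ξ → W' :=
  ζ ∘ Function.surjInv (piMap_surjective A ξ)

lemma liftGVert_comp_piMap {ζ : V → W'} (hΓ : GammaComp A ζ = GammaComp A ξ) :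
    liftGVert A ξ ζ ∘ piMap A ξ = ζ := by
  funext v
  have hv := piMap_eq_piMap_iff.mp (Function.surjInv_eq (piMap_surjective A ξ) (piMap A ξ v)).symm
  rw [← hΓ] at hv
  exact apply_eq_of_mem_gammaComp hv

lemma liftGVert_comp (σ : GVert A ξ → W') : liftGVert A ξ (σ ∘ piMap A ξ) = σ :=
  funext fun C => congrArg σ (Function.surjInv_eq (piMap_surjective A ξ) C)

lemma isStrictHom_liftGVert {ζ : V → W'} (hζ : IsHom A B ζ)
    (hΓ : GammaComp A ζ = GammaComp A ξ) : IsStrictHom (GArc A ξ) B (liftGVert A ξ ζ) := by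
  rw [isStrictHom_gArc_iff, liftGVert_comp_piMap hΓ]
  refine ⟨hζ, fun a b hab hne heq => hne ?_⟩
  rw [piMap_eq_piMap_iff, ← hΓ]
  exact mem_gammaComp_of_dAdj (Or.inl hab) heq

lemma gammaComp_comp_piMap {σ : GVert A ξ → W'} (hσ : IsStrictHom (GArc A ξ) B σ) :
    GammaComp A (σ ∘ piMap A ξ) = GammaComp A ξ := by
  have hstrict := (isStrictHom_gArc_iff.mp hσ).2
  funext v
  apply subset_antisymm <;> apply gammaComp_subset_gammaComp
  · intro a b hab hσab
    have hπ : piMap A ξ a = piMap A ξ b := by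
      by_contra hne
      rcases hab with hab | hab
      exacts [hstrict hab hne hσab, hstrict hab (Ne.symm hne) hσab.symm]
    exact (apply_eq_of_mem_gammaComp (piMap_eq_piMap_iff.mp hπ)).symm
  · intro a b hab hξab
    exact congrArg σ (piMap_eq_piMap_iff.mpr (mem_gammaComp_of_dAdj hab hξab))

variable (A ξ) in
noncomputable def homFiberEquivStrictHom (B : W' → W' → Prop) :
    {ζ : HomSet A B // GammaComp A ζ.1 = GammaComp A ξ} ≃ StrictHomSet (GArc A ξ) B where
  toFun ζ := ⟨liftGVert A ξ ζ.1.1, isStrictHom_liftGVert ζ.1.2 ζ.2⟩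
  invFun σ := ⟨⟨σ.1 ∘ piMap A ξ, (isStrictHom_gArc_iff.mp σ.2).1⟩, gammaComp_comp_piMap σ.2⟩
  left_inv ζ := Subtype.ext (Subtype.ext (liftGVert_comp_piMap ζ.2))
  right_inv σ := Subtype.ext (liftGVert_comp σ.1)

instance [Finite V] : Finite (GVert A ξ) :=
  Finite.of_surjective _ (piMap_surjective A ξ)

instance [Nonempty V] : Nonempty (GVert A ξ) :=
  .map (piMap A ξ) ‹_›

end Quotient

instance {V W : Type} [Finite V] [Finite W] {A : V → V → Prop} {B : W → W → Prop} :
    Finite (HomSet A B) :=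
  Subtype.finite

theorem stmt12_general {VR VS : Type} [Finite VS]
    (R : VR → VR → Prop) (S : VS → VS → Prop)
    (h : ∀ (V : Type) [Finite V] [Nonempty V] (A : V → V → Prop),
      Nat.card (StrictHomSet A R) ≤ Nat.card (StrictHomSet A S)) :
    ∀ (V : Type) [Finite V] [Nonempty V] (A : V → V → Prop),
      Nat.card (HomSet A R) ≤ Nat.card (HomSet A S) := by
  intro V _ _ A
  refine card_le_card_of_card_fiber_le (f := fun ξ : HomSet A R => GammaComp A ξ.1)
    (g := fun ζ : HomSet A S => GammaComp A ζ.1) fun ξ => ?_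
  calc Nat.card {ξ' : HomSet A R // GammaComp A ξ'.1 = GammaComp A ξ.1}
      = Nat.card (StrictHomSet (GArc A ξ.1) R) := Nat.card_congr (homFiberEquivStrictHom A ξ.1 R)
    _ ≤ Nat.card (StrictHomSet (GArc A ξ.1) S) := h _ _
    _ = Nat.card {ζ : HomSet A S // GammaComp A ζ.1 = GammaComp A ξ.1} :=
      (Nat.card_congr (homFiberEquivStrictHom A ξ.1 S)).symm

/-- If `#S(G,R) ≤ #S(G,S)` for every finite digraph `G`, then
`#H(G,R) ≤ #H(G,S)` for every finite digraph `G`. -/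
theorem stmt12 {VR VS : Type} [Finite VR] [Nonempty VR] [Finite VS] [Nonempty VS]
    (R : VR → VR → Prop) (S : VS → VS → Prop)
    (h : ∀ (V : Type) [Finite V] [Nonempty V] (A : V → V → Prop),
      Nat.card (StrictHomSet A R) ≤ Nat.card (StrictHomSet A S)) :
    ∀ (V : Type) [Finite V] [Nonempty V] (A : V → V → Prop),
      Nat.card (HomSet A R) ≤ Nat.card (HomSet A S) :=
  stmt12_general R S h
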